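/- The ℂ-subalgebra Aₙ of R generated by the set { ν₂^{(σ,τ)} : σ, τ ∈ Sₙ } equals the ℂ-subalgebra generated by the (n−1)² products (z_i − z_n)(w_j − w_n) for 1 ≤ i, j ≤ n−1. Moreover, the kernel of the ℂ-algebra homomorphism θ from the polynomial ring ℂ[d_{ij} : 1 ≤ i, j ≤ n−1] to R determined by θ(d_{ij}) = (z_i − z_n)(w_j − w_n) is the ideal generated by all 2×2 minors d_{i₁j₁}d_{i₂j₂} − d_{i₁j₂}d_{i₂j₁} (1 ≤ i₁, i₂, j₁, j₂ ≤ n−1); hence Aₙ ≅ ℂ[d_{ij}]/I₂, the determinantal ring of the generic (n−1)×(n−1) matrix modulo its 2×2 minors. -/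

import Mathlib

open MvPolynomial Finset

noncomputable section

def Zv (n : ℕ) (j : Fin n) : MvPolynomial (Fin n ⊕ Fin n) ℂ := X (Sum.inl j)

def Wv (n : ℕ) (j : Fin n) : MvPolynomial (Fin n ⊕ Fin n) ℂ := X (Sum.inr j)

/-- The second normalized harmonic moment `ν₂`. -/
def nu2 (n : ℕ) [NeZero n] : MvPolynomial (Fin n ⊕ Fin n) ℂ :=
  C (Complex.I / 4) *
    ∑ j : Fin n, (Wv n j - Wv n (j + 1)) * (Zv n j + Zv n (j + 1))

/-- `ν₂^{(σ,τ)}`: substitution `z_j ↦ z_{σ(j)}`, `w_j ↦ w_{τ(j)}` in `ν₂`. -/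
def nu2Perm (n : ℕ) [NeZero n] (σ τ : Equiv.Perm (Fin n)) : MvPolynomial (Fin n ⊕ Fin n) ℂ :=
  MvPolynomial.rename (Sum.map ⇑σ ⇑τ) (nu2 n)

/-- The product `(z_i − z_n)(w_j − w_n)` for `1 ≤ i, j ≤ n−1` (`0`-based: the last index
plays the role of `n`). -/
def phiProd (n : ℕ) [NeZero n] (p : Fin (n - 1) × Fin (n - 1)) :
    MvPolynomial (Fin n ⊕ Fin n) ℂ :=
  (Zv n (Fin.castLE (Nat.sub_le n 1) p.1) - Zv n ⟨n - 1, Nat.sub_lt (NeZero.pos n) one_pos⟩) *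
    (Wv n (Fin.castLE (Nat.sub_le n 1) p.2) - Wv n ⟨n - 1, Nat.sub_lt (NeZero.pos n) one_pos⟩)

/-- The `ℂ`-algebra map `θ : ℂ[d_{ij}] → R`, `d_{ij} ↦ (z_i − z_n)(w_j − w_n)`. -/
def theta (n : ℕ) [NeZero n] :
    MvPolynomial (Fin (n - 1) × Fin (n - 1)) ℂ →ₐ[ℂ] MvPolynomial (Fin n ⊕ Fin n) ℂ :=
  MvPolynomial.aeval (phiProd n)


section Aux

variable (m : ℕ)

/-- margins of an exponent matrix -/
def marg (A : (Fin m × Fin m) →₀ ℕ) : (Fin m ⊕ Fin m) →₀ ℕ :=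
  Finsupp.equivFunOnFinite.symm
    (Sum.elim (fun i => ∑ j, A (i, j)) (fun j => ∑ i, A (i, j)))

lemma marg_inl (A : (Fin m × Fin m) →₀ ℕ) (i : Fin m) :
    marg m A (Sum.inl i) = ∑ j, A (i, j) := rfl

lemma marg_inr (A : (Fin m × Fin m) →₀ ℕ) (j : Fin m) :
    marg m A (Sum.inr j) = ∑ i, A (i, j) := rfl

def minorSet : Set (MvPolynomial (Fin m × Fin m) ℂ) :=
  {q | ∃ i₁ i₂ j₁ j₂ : Fin m, q = X (i₁, j₁) * X (i₂, j₂) - X (i₁, j₂) * X (i₂, j₁)}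

/-- the Segre-type map -/
def kapMap : MvPolynomial (Fin m × Fin m) ℂ →ₐ[ℂ] MvPolynomial (Fin m ⊕ Fin m) ℂ :=
  aeval (fun p : Fin m × Fin m => X (Sum.inl p.1) * X (Sum.inr p.2))

lemma kap_monomial (A : (Fin m × Fin m) →₀ ℕ) (c : ℂ) :
    kapMap m (monomial A c) = monomial (marg m A) c := by
  rw [monomial_eq, monomial_eq]
  rw [Finsupp.prod_fintype _ _ (fun i => by simp),
      Finsupp.prod_fintype _ _ (fun i => by simp)]
  rw [map_mul]
  have hC : kapMap m (C c) = C c := by simp [kapMap]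
  rw [hC, map_prod]
  congr 1
  have : ∀ p : Fin m × Fin m, kapMap m (X p ^ A p) =
      (X (Sum.inl p.1) * X (Sum.inr p.2)) ^ A p := by
    intro p; rw [map_pow]; simp [kapMap]
  rw [Finset.prod_congr rfl (fun p _ => this p)]
  rw [Fintype.prod_sum_type]
  simp_rw [mul_pow]
  rw [Finset.prod_mul_distrib]
  congr 1
  · rw [Fintype.prod_prod_type]
    refine Finset.prod_congr rfl (fun i _ => ?_)
    show ∏ y : Fin m, X (Sum.inl i) ^ A (i, y) = _
    rw [Finset.prod_pow_eq_pow_sum]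
    rfl
  · rw [Fintype.prod_prod_type]
    rw [Finset.prod_comm]
    refine Finset.prod_congr rfl (fun j _ => ?_)
    show ∏ x : Fin m, X (Sum.inr j) ^ A (x, j) = _
    rw [Finset.prod_pow_eq_pow_sum]
    rfl

lemma sum_split2 {α : Type*} [Fintype α] [DecidableEq α] (f : α → ℕ) (a b : α) (hab : a ≠ b) :
    ∑ x, f x = f a + f b + ∑ x ∈ (univ.erase a).erase b, f x := by
  rw [← Finset.add_sum_erase _ f (mem_univ a)]
  rw [← Finset.add_sum_erase _ f (Finset.mem_erase.2 ⟨hab.symm, mem_univ b⟩)]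
  ring

lemma sum_split4 {α : Type*} [Fintype α] [DecidableEq α] (f : α → ℕ) (a b c d : α)
    (hab : a ≠ b) (hac : a ≠ c) (had : a ≠ d) (hbc : b ≠ c) (hbd : b ≠ d) (hcd : c ≠ d) :
    ∑ x, f x = f a + f b + f c + f d + ∑ x ∈ (((univ.erase a).erase b).erase c).erase d, f x := by
  rw [← Finset.add_sum_erase _ f (mem_univ a)]
  rw [← Finset.add_sum_erase _ f (Finset.mem_erase.2 ⟨hab.symm, mem_univ b⟩)]
  rw [← Finset.add_sum_erase _ f
    (Finset.mem_erase.2 ⟨hbc.symm, Finset.mem_erase.2 ⟨hac.symm, mem_univ c⟩⟩)]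
  rw [← Finset.add_sum_erase _ f
    (Finset.mem_erase.2 ⟨hcd.symm, Finset.mem_erase.2
      ⟨hbd.symm, Finset.mem_erase.2 ⟨had.symm, mem_univ d⟩⟩⟩)]
  ring

lemma connect (A B : (Fin m × Fin m) →₀ ℕ) (hmg : marg m A = marg m B) :
    (monomial A 1 - monomial B 1 : MvPolynomial (Fin m × Fin m) ℂ) ∈
      Ideal.span (minorSet m) := by
  suffices H : ∀ d (A B : (Fin m × Fin m) →₀ ℕ), marg m A = marg m B →
      (∑ p : Fin m × Fin m, (A p - B p)) = d →
      (monomial A 1 - monomial B 1 : MvPolynomial (Fin m × Fin m) ℂ) ∈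
        Ideal.span (minorSet m) from H _ A B hmg rfl
  intro d
  induction d using Nat.strong_induction_on with
  | _ d IH =>
    intro A B hmg hd
    by_cases hAB : A = B
    · rw [hAB, sub_self]; exact Ideal.zero_mem _
    -- total sums agree
    have hrow : ∀ i, ∑ j, A (i, j) = ∑ j, B (i, j) := by
      intro i
      have := DFunLike.congr_fun hmg (Sum.inl i)
      rwa [marg_inl, marg_inl] at this
    have hcol : ∀ j, ∑ i, A (i, j) = ∑ i, B (i, j) := by
      intro j
      have := DFunLike.congr_fun hmg (Sum.inr j)
      rwa [marg_inr, marg_inr] at this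
    have htot : ∑ p : Fin m × Fin m, A p = ∑ p : Fin m × Fin m, B p := by
      rw [Fintype.sum_prod_type, Fintype.sum_prod_type]
      exact Finset.sum_congr rfl fun i _ => hrow i
    -- find a point where A > B
    have hex : ∃ p : Fin m × Fin m, B p < A p := by
      by_contra hc
      push_neg at hc
      obtain ⟨q, hq⟩ : ∃ q, A q ≠ B q := by
        by_contra hc2; push_neg at hc2; exact hAB (Finsupp.ext hc2)
      have : ∑ p : Fin m × Fin m, A p < ∑ p : Fin m × Fin m, B p :=
        Finset.sum_lt_sum (fun p _ => hc p) ⟨q, mem_univ q, lt_of_le_of_ne (hc q) hq⟩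
      omega
    obtain ⟨⟨i1, j1⟩, h11⟩ := hex
    -- find j2 in the same row with A < B
    have hexj : ∃ j2, A (i1, j2) < B (i1, j2) := by
      by_contra hc
      push_neg at hc
      have : ∑ j, B (i1, j) < ∑ j, A (i1, j) :=
        Finset.sum_lt_sum (fun j _ => hc j) ⟨j1, mem_univ j1, h11⟩
      have := hrow i1
      omega
    obtain ⟨j2, h12⟩ := hexj
    have hj : j1 ≠ j2 := by rintro rfl; omega
    -- find i2 in column j2 with A > B
    have hexi : ∃ i2, B (i2, j2) < A (i2, j2) := by
      by_contra hc
      push_neg at hc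
      have : ∑ i, A (i, j2) < ∑ i, B (i, j2) :=
        Finset.sum_lt_sum (fun i _ => hc i) ⟨i1, mem_univ i1, h12⟩
      have := hcol j2
      omega
    obtain ⟨i2, h22⟩ := hexi
    have hi : i1 ≠ i2 := by rintro rfl; omega
    -- distinctness of the four points
    have hne12 : ((i1, j1) : Fin m × Fin m) ≠ (i2, j2) := by
      simp [Prod.ext_iff]; intro h; exact absurd h hi
    -- the modified matrix
    set Cm : (Fin m × Fin m) →₀ ℕ :=
      A - Finsupp.single (i1, j1) 1 - Finsupp.single (i2, j2) 1 with hCm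
    set A' : (Fin m × Fin m) →₀ ℕ :=
      Cm + Finsupp.single (i1, j2) 1 + Finsupp.single (i2, j1) 1 with hA'
    have hCval : ∀ p, Cm p = A p - (if (i1,j1) = p then 1 else 0) -
        (if (i2,j2) = p then 1 else 0) := by
      intro p
      simp [hCm, Finsupp.tsub_apply, Finsupp.single_apply]
    have hA'val : ∀ p, A' p = A p - (if (i1,j1) = p then 1 else 0) -
        (if (i2,j2) = p then 1 else 0) + (if (i1,j2) = p then 1 else 0) +
        (if (i2,j1) = p then 1 else 0) := by
      intro p
      simp [hA', hCval p, Finsupp.single_apply]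
    -- values at the four points
    have hv1 : A' (i1, j1) = A (i1, j1) - 1 := by
      rw [hA'val]
      have e2 : ((i2,j2) : Fin m × Fin m) ≠ (i1,j1) := by simp [Prod.ext_iff]; intro h; exact absurd h.symm hi
      have e3 : ((i1,j2) : Fin m × Fin m) ≠ (i1,j1) := by simp [Prod.ext_iff]; intro h; exact absurd h.symm hj
      have e4 : ((i2,j1) : Fin m × Fin m) ≠ (i1,j1) := by simp [Prod.ext_iff]; intro h; exact absurd h.symm hi
      simp [e2, e3, e4]
    have hv2 : A' (i2, j2) = A (i2, j2) - 1 := by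
      rw [hA'val]
      have e1 : ((i1,j1) : Fin m × Fin m) ≠ (i2,j2) := hne12
      have e3 : ((i1,j2) : Fin m × Fin m) ≠ (i2,j2) := by simp [Prod.ext_iff]; intro h; exact absurd h hi
      have e4 : ((i2,j1) : Fin m × Fin m) ≠ (i2,j2) := by simp [Prod.ext_iff]; intro h; exact absurd h hj
      simp [e1, e3, e4]
    have hv3 : A' (i1, j2) = A (i1, j2) + 1 := by
      rw [hA'val]
      have e1 : ((i1,j1) : Fin m × Fin m) ≠ (i1,j2) := by simp [Prod.ext_iff]; intro h; exact absurd h hj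
      have e2 : ((i2,j2) : Fin m × Fin m) ≠ (i1,j2) := by simp [Prod.ext_iff]; intro h; exact absurd h.symm hi
      have e4 : ((i2,j1) : Fin m × Fin m) ≠ (i1,j2) := by simp [Prod.ext_iff]; intro h; exact absurd h.symm hi
      simp [e1, e2, e4]
    have hv4 : A' (i2, j1) = A (i2, j1) + 1 := by
      rw [hA'val]
      have e1 : ((i1,j1) : Fin m × Fin m) ≠ (i2,j1) := by simp [Prod.ext_iff]; intro h; exact absurd h hi
      have e2 : ((i2,j2) : Fin m × Fin m) ≠ (i2,j1) := by simp [Prod.ext_iff]; intro h; exact absurd h.symm hj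
      have e3 : ((i1,j2) : Fin m × Fin m) ≠ (i2,j1) := by simp [Prod.ext_iff]; intro h; exact absurd h hi
      simp [e1, e2, e3]
    have hv5 : ∀ p, p ≠ (i1,j1) → p ≠ (i2,j2) → p ≠ (i1,j2) → p ≠ (i2,j1) → A' p = A p := by
      intro p h1 h2 h3 h4
      rw [hA'val]
      simp [Ne.symm h1, Ne.symm h2, Ne.symm h3, Ne.symm h4]
    -- margins unchanged
    have hmargA' : marg m A' = marg m A := by
      ext s
      cases s with
      | inl i =>
        rw [marg_inl, marg_inl]
        by_cases hii1 : i = i1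
        · subst hii1
          rw [sum_split2 (fun j => A' (i, j)) j1 j2 hj,
              sum_split2 (fun j => A (i, j)) j1 j2 hj]
          have hrest : ∑ j ∈ (univ.erase j1).erase j2, A' (i, j) =
              ∑ j ∈ (univ.erase j1).erase j2, A (i, j) := by
            refine Finset.sum_congr rfl fun j hjm => ?_
            rw [Finset.mem_erase, Finset.mem_erase] at hjm
            exact hv5 _ (by simp [Prod.ext_iff, hjm.2.1]) (by simp [Prod.ext_iff]; intro h; exact absurd h hi)
              (by simp [Prod.ext_iff, hjm.1]) (by simp [Prod.ext_iff]; intro h; exact absurd h hi)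
          omega
        · by_cases hii2 : i = i2
          · subst hii2
            rw [sum_split2 (fun j => A' (i, j)) j1 j2 hj,
                sum_split2 (fun j => A (i, j)) j1 j2 hj]
            have hrest : ∑ j ∈ (univ.erase j1).erase j2, A' (i, j) =
                ∑ j ∈ (univ.erase j1).erase j2, A (i, j) := by
              refine Finset.sum_congr rfl fun j hjm => ?_
              rw [Finset.mem_erase, Finset.mem_erase] at hjm
              exact hv5 _ (by simp [Prod.ext_iff]; intro h; exact absurd h.symm hi)
                (by simp [Prod.ext_iff, hjm.1]) (by simp [Prod.ext_iff]; intro h; exact absurd h.symm hi)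
                (by simp [Prod.ext_iff, hjm.2.1])
            omega
          · refine Finset.sum_congr rfl fun j _ => ?_
            exact hv5 _ (by simp [Prod.ext_iff, hii1]) (by simp [Prod.ext_iff, hii2])
              (by simp [Prod.ext_iff, hii1]) (by simp [Prod.ext_iff, hii2])
      | inr j =>
        rw [marg_inr, marg_inr]
        by_cases hjj1 : j = j1
        · subst hjj1
          rw [sum_split2 (fun i => A' (i, j)) i1 i2 hi,
              sum_split2 (fun i => A (i, j)) i1 i2 hi]
          have hrest : ∑ i ∈ (univ.erase i1).erase i2, A' (i, j) =
              ∑ i ∈ (univ.erase i1).erase i2, A (i, j) := by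
            refine Finset.sum_congr rfl fun i him => ?_
            rw [Finset.mem_erase, Finset.mem_erase] at him
            exact hv5 _ (by simp [Prod.ext_iff, him.2.1]) (by simp [Prod.ext_iff, him.1])
              (by simp [Prod.ext_iff]; intro _ h; exact absurd h hj)
              (by simp [Prod.ext_iff, him.1])
          omega
        · by_cases hjj2 : j = j2
          · subst hjj2
            rw [sum_split2 (fun i => A' (i, j)) i1 i2 hi,
                sum_split2 (fun i => A (i, j)) i1 i2 hi]
            have hrest : ∑ i ∈ (univ.erase i1).erase i2, A' (i, j) =
                ∑ i ∈ (univ.erase i1).erase i2, A (i, j) := by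
              refine Finset.sum_congr rfl fun i him => ?_
              rw [Finset.mem_erase, Finset.mem_erase] at him
              exact hv5 _ (by simp [Prod.ext_iff]; intro _ h; exact absurd h.symm hj)
                (by simp [Prod.ext_iff, him.1]) (by simp [Prod.ext_iff, him.2.1])
                (by simp [Prod.ext_iff, him.1])
            omega
          · refine Finset.sum_congr rfl fun i _ => ?_
            exact hv5 _ (by simp [Prod.ext_iff, hjj1]) (by simp [Prod.ext_iff, hjj2])
              (by simp [Prod.ext_iff, hjj2]) (by simp [Prod.ext_iff, hjj1])
    -- the measure strictly decreases
    have hP13 : ((i1,j1) : Fin m × Fin m) ≠ (i1,j2) := by simp [Prod.ext_iff]; intro h; exact absurd h hj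
    have hP14 : ((i1,j1) : Fin m × Fin m) ≠ (i2,j1) := by simp [Prod.ext_iff]; intro h; exact absurd h hi
    have hP23 : ((i2,j2) : Fin m × Fin m) ≠ (i1,j2) := by simp [Prod.ext_iff]; intro h; exact absurd h hi.symm
    have hP24 : ((i2,j2) : Fin m × Fin m) ≠ (i2,j1) := by simp [Prod.ext_iff]; intro h; exact absurd h hj.symm
    have hP34 : ((i1,j2) : Fin m × Fin m) ≠ (i2,j1) := by simp [Prod.ext_iff]; intro h; exact absurd h hi
    have hmes : (∑ p : Fin m × Fin m, (A' p - B p)) < d := by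
      rw [sum_split4 (fun p => A' p - B p) (i1,j1) (i2,j2) (i1,j2) (i2,j1)
            hne12 hP13 hP14 hP23 hP24 hP34]
      rw [← hd, sum_split4 (fun p => A p - B p) (i1,j1) (i2,j2) (i1,j2) (i2,j1)
            hne12 hP13 hP14 hP23 hP24 hP34]
      have hrest : ∑ p ∈ ((((univ.erase (i1,j1)).erase (i2,j2)).erase (i1,j2)).erase (i2,j1)),
          (A' p - B p) = ∑ p ∈ ((((univ.erase (i1,j1)).erase (i2,j2)).erase (i1,j2)).erase (i2,j1)),
          (A p - B p) := by
        refine Finset.sum_congr rfl fun p hp => ?_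
        simp only [Finset.mem_erase] at hp
        rw [hv5 p hp.2.2.2.1 hp.2.2.1 hp.2.1 hp.1]
      omega
    -- the single exchange step lies in the ideal
    have hAeq : A = Cm + Finsupp.single (i1,j1) 1 + Finsupp.single (i2,j2) 1 := by
      ext p
      have h1le : 1 ≤ A (i1,j1) := by omega
      have h2le : 1 ≤ A (i2,j2) := by omega
      simp only [Finsupp.add_apply, Finsupp.single_apply, hCval p]
      rcases eq_or_ne ((i1,j1) : Fin m × Fin m) p with e1 | e1
      · have e2 : ((i2,j2) : Fin m × Fin m) ≠ p := fun h => hne12 (e1.trans h.symm)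
        rw [if_pos e1, if_neg e2, ← e1]
        omega
      · rw [if_neg e1]
        rcases eq_or_ne ((i2,j2) : Fin m × Fin m) p with e2 | e2
        · rw [if_pos e2, ← e2]; omega
        · rw [if_neg e2]; omega
    have hstep : (monomial A 1 - monomial A' 1 : MvPolynomial (Fin m × Fin m) ℂ) ∈
        Ideal.span (minorSet m) := by
      have heq : (monomial A 1 - monomial A' 1 : MvPolynomial (Fin m × Fin m) ℂ) =
          monomial Cm 1 * (X (i1,j1) * X (i2,j2) - X (i1,j2) * X (i2,j1)) := by
        rw [hAeq, hA']
        rw [X, X, X, X, mul_sub, monomial_mul, monomial_mul, monomial_mul, monomial_mul]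
        rw [add_assoc, add_assoc]
        norm_num
      rw [heq]
      exact Ideal.mul_mem_left _ _ (Ideal.subset_span ⟨i1, i2, j1, j2, rfl⟩)
    have hIH := IH (∑ p : Fin m × Fin m, (A' p - B p)) hmes A' B (hmargA'.trans hmg) rfl
    have hsplit : (monomial A 1 - monomial B 1 : MvPolynomial (Fin m × Fin m) ℂ) =
        (monomial A 1 - monomial A' 1) + (monomial A' 1 - monomial B 1) := by ring
    rw [hsplit]
    exact Ideal.add_mem _ hstep hIH

lemma kap_minor_zero : ∀ q ∈ minorSet m, kapMap m q = 0 := by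
  rintro q ⟨i1, i2, j1, j2, rfl⟩
  simp only [map_sub, map_mul, kapMap, aeval_X]
  ring

lemma ker_kap_le (f : MvPolynomial (Fin m × Fin m) ℂ) (hf : kapMap m f = 0) :
    f ∈ Ideal.span (minorSet m) := by
  classical
  set sec : ((Fin m ⊕ Fin m) →₀ ℕ) → ((Fin m × Fin m) →₀ ℕ) :=
    fun v => if h : ∃ A, marg m A = v then h.choose else 0 with hsecdef
  have hsec : ∀ A, marg m (sec (marg m A)) = marg m A := by
    intro A
    have hex : ∃ A', marg m A' = marg m A := ⟨A, rfl⟩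
    simp only [hsecdef, dif_pos hex]
    exact hex.choose_spec
  set g : MvPolynomial (Fin m × Fin m) ℂ :=
    ∑ A ∈ f.support, monomial (sec (marg m A)) (coeff A f) with hgdef
  have hfg : f - g = ∑ A ∈ f.support,
      (monomial A (coeff A f) - monomial (sec (marg m A)) (coeff A f)) := by
    rw [Finset.sum_sub_distrib, ← hgdef]
    congr 1
    exact f.as_sum
  have h1 : f - g ∈ Ideal.span (minorSet m) := by
    rw [hfg]
    refine Ideal.sum_mem _ fun A _ => ?_
    have : (monomial A (coeff A f) - monomial (sec (marg m A)) (coeff A f) :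
        MvPolynomial (Fin m × Fin m) ℂ) =
        C (coeff A f) * (monomial A 1 - monomial (sec (marg m A)) 1) := by
      rw [mul_sub, C_mul_monomial, C_mul_monomial, mul_one]
    rw [this]
    exact Ideal.mul_mem_left _ _ (connect m A (sec (marg m A)) (hsec A).symm)
  have hkapf : kapMap m f = ∑ A ∈ f.support, monomial (marg m A) (coeff A f) := by
    conv_lhs => rw [f.as_sum]
    rw [map_sum]
    exact Finset.sum_congr rfl fun A _ => kap_monomial m A _
  have hkg : (∑ A ∈ f.support, monomial (marg m A) (coeff A f) :
      MvPolynomial (Fin m ⊕ Fin m) ℂ) = 0 := by rw [← hkapf, hf]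
  have hK : ∀ v, (∑ A ∈ f.support.filter (fun A => marg m A = v), coeff A f) = 0 := by
    intro v
    have h := congrArg (coeff v) hkg
    rw [coeff_sum] at h
    simp only [coeff_monomial, coeff_zero] at h
    rw [Finset.sum_filter]
    exact h
  have h3 : g = 0 := by
    rw [hgdef]
    rw [← Finset.sum_fiberwise_of_maps_to
      (g := fun A => marg m A) (t := f.support.image (marg m))
      (fun A hA => Finset.mem_image_of_mem _ hA)]
    refine Finset.sum_eq_zero fun v _ => ?_
    have heq : ∑ A ∈ f.support.filter (fun A => marg m A = v),
        monomial (sec (marg m A)) (coeff A f)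
        = ∑ A ∈ f.support.filter (fun A => marg m A = v), monomial (sec v) (coeff A f) := by
      refine Finset.sum_congr rfl fun A hA => ?_
      rw [(Finset.mem_filter.1 hA).2]
    rw [heq, ← map_sum (monomial (sec v)) _ _, hK v, map_zero]
  rw [h3, sub_zero] at h1
  exact h1

lemma span_minor_le_ker_kap (f : MvPolynomial (Fin m × Fin m) ℂ)
    (hf : f ∈ Ideal.span (minorSet m)) : kapMap m f = 0 := by
  have : Ideal.span (minorSet m) ≤ RingHom.ker (kapMap m) := by
    rw [Ideal.span_le]
    intro q hq
    exact kap_minor_zero m q hq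
  exact this hf

def psiMap (n : ℕ) [NeZero n] :
    MvPolynomial (Fin n ⊕ Fin n) ℂ →ₐ[ℂ] MvPolynomial (Fin (n-1) ⊕ Fin (n-1)) ℂ :=
  aeval (Sum.elim
    (fun i : Fin n => if h : (i : ℕ) < n - 1 then X (Sum.inl ⟨(i : ℕ), h⟩) else 0)
    (fun j : Fin n => if h : (j : ℕ) < n - 1 then X (Sum.inr ⟨(j : ℕ), h⟩) else 0))

lemma psi_phi (n : ℕ) [NeZero n] (p : Fin (n-1) × Fin (n-1)) :
    psiMap n (phiProd n p) = X (Sum.inl p.1) * X (Sum.inr p.2) := by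
  have h1 : (p.1 : ℕ) < n - 1 := p.1.isLt
  have h2 : (p.2 : ℕ) < n - 1 := p.2.isLt
  have hL : ¬ (n - 1 < n - 1) := lt_irrefl _
  simp only [psiMap, phiProd, Zv, Wv, map_mul, map_sub, aeval_X, Sum.elim_inl, Sum.elim_inr,
    Fin.coe_castLE, dif_pos h1, dif_pos h2, dif_neg hL]
  simp

lemma theta_ker_eq (n : ℕ) [NeZero n] :
    RingHom.ker (theta n) = Ideal.span (minorSet (n-1)) := by
  apply le_antisymm
  · intro f hf
    have hcomp : (psiMap n).comp (theta n) = kapMap (n-1) := by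
      apply MvPolynomial.algHom_ext
      intro p
      show psiMap n (theta n (X p)) = _
      rw [theta, aeval_X, psi_phi]
      rw [kapMap, aeval_X]
    have hk : kapMap (n-1) f = 0 := by
      have : psiMap n (theta n f) = kapMap (n-1) f := by
        rw [← hcomp]; rfl
      rw [← this, RingHom.mem_ker.1 hf, map_zero]
    exact ker_kap_le _ f hk
  · rw [Ideal.span_le]
    rintro q ⟨i1, i2, j1, j2, rfl⟩
    have : theta n (X (i1, j1) * X (i2, j2) - X (i1, j2) * X (i2, j1)) = 0 := by
      simp only [map_sub, map_mul, theta, aeval_X, phiProd]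
      ring
    exact this

/-- the distinguished last index -/
def Lst (n : ℕ) [NeZero n] : Fin n := ⟨n - 1, Nat.sub_lt (NeZero.pos n) one_pos⟩

lemma nu2Perm_eq (n : ℕ) [NeZero n] (σ τ : Equiv.Perm (Fin n)) :
    nu2Perm n σ τ = C (Complex.I / 4) *
      ∑ j : Fin n, (Wv n (τ j) - Wv n (τ (j + 1))) * (Zv n (σ j) + Zv n (σ (j + 1))) := by
  simp only [nu2Perm, nu2, map_mul, map_sum, map_sub, map_add, Zv, Wv, rename_X,
    Sum.map_inl, Sum.map_inr, rename_C]

lemma nu2Perm_sumP (n : ℕ) [NeZero n] (σ τ : Equiv.Perm (Fin n)) :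
    nu2Perm n σ τ = C (Complex.I / 4) * ∑ j : Fin n,
      ((Zv n (σ (j + 1)) - Zv n (Lst n)) * (Wv n (τ j) - Wv n (Lst n)) -
        (Zv n (σ j) - Zv n (Lst n)) * (Wv n (τ (j + 1)) - Wv n (Lst n))) := by
  rw [nu2Perm_eq]
  congr 1
  rw [← sub_eq_zero, ← Finset.sum_sub_distrib]
  have key : ∀ j : Fin n,
      (Wv n (τ j) - Wv n (τ (j + 1))) * (Zv n (σ j) + Zv n (σ (j + 1))) -
      ((Zv n (σ (j + 1)) - Zv n (Lst n)) * (Wv n (τ j) - Wv n (Lst n)) -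
        (Zv n (σ j) - Zv n (Lst n)) * (Wv n (τ (j + 1)) - Wv n (Lst n))) =
      (fun k => Zv n (σ k) * Wv n (τ k) - Zv n (σ k) * Wv n (Lst n)
        + Zv n (Lst n) * Wv n (τ k)) j -
      (fun k => Zv n (σ k) * Wv n (τ k) - Zv n (σ k) * Wv n (Lst n)
        + Zv n (Lst n) * Wv n (τ k)) (j + 1) := by
    intro j
    simp only
    ring
  rw [Finset.sum_congr rfl fun j _ => key j, Finset.sum_sub_distrib]
  have hre := Fintype.sum_bijective (fun x : Fin n => x + 1)
    (Equiv.addRight (1 : Fin n)).bijective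
    (fun x => (fun k => Zv n (σ k) * Wv n (τ k) - Zv n (σ k) * Wv n (Lst n)
      + Zv n (Lst n) * Wv n (τ k)) (x + 1))
    (fun k => Zv n (σ k) * Wv n (τ k) - Zv n (σ k) * Wv n (Lst n) + Zv n (Lst n) * Wv n (τ k))
    (fun x => rfl)
  rw [hre]
  exact sub_self _

lemma Pmem (n : ℕ) [NeZero n] (a b : Fin n) :
    (Zv n a - Zv n (Lst n)) * (Wv n b - Wv n (Lst n)) ∈
      Algebra.adjoin ℂ (Set.range (phiProd n)) := by
  by_cases ha : (a : ℕ) < n - 1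
  · by_cases hb : (b : ℕ) < n - 1
    · have : (Zv n a - Zv n (Lst n)) * (Wv n b - Wv n (Lst n)) =
          phiProd n (⟨(a : ℕ), ha⟩, ⟨(b : ℕ), hb⟩) := by
        have h1 : Fin.castLE (Nat.sub_le n 1) (⟨(a : ℕ), ha⟩ : Fin (n-1)) = a := rfl
        have h2 : Fin.castLE (Nat.sub_le n 1) (⟨(b : ℕ), hb⟩ : Fin (n-1)) = b := rfl
        rw [phiProd, h1, h2]
        rfl
      rw [this]
      exact Algebra.subset_adjoin ⟨_, rfl⟩
    · have hbL : b = Lst n := by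
        have := b.isLt
        exact Fin.ext (by simp only [Lst]; omega)
      rw [hbL, sub_self, mul_zero]
      exact Subalgebra.zero_mem _
  · have haL : a = Lst n := by
      have := a.isLt
      exact Fin.ext (by simp only [Lst]; omega)
    rw [haL, sub_self, zero_mul]
    exact Subalgebra.zero_mem _

lemma nu2Perm_mem (n : ℕ) [NeZero n] (σ τ : Equiv.Perm (Fin n)) :
    nu2Perm n σ τ ∈ Algebra.adjoin ℂ (Set.range (phiProd n)) := by
  rw [nu2Perm_sumP]
  refine Subalgebra.mul_mem _ ?_ ?_
  · exact Subalgebra.algebraMap_mem _ (Complex.I / 4)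
  · refine Subalgebra.sum_mem _ fun j _ => ?_
    exact Subalgebra.sub_mem _ (Pmem n _ _) (Pmem n _ _)

lemma one_ne_zero_fin (n : ℕ) [NeZero n] (hn : 3 ≤ n) : (1 : Fin n) ≠ 0 := by
  have h1 : ((1 : Fin n) : ℕ) = 1 % n := Fin.val_one' n
  intro h
  have := congrArg Fin.val h
  rw [h1, Fin.val_zero, Nat.mod_eq_of_lt (by omega)] at this
  omega

lemma fin_succ_ne_self (n : ℕ) [NeZero n] (hn : 3 ≤ n) (c : Fin n) : c ≠ c + 1 := by
  intro h
  have : (0 : Fin n) = 1 := by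
    have := h
    nth_rewrite 1 [show c = c + 0 from (add_zero c).symm] at this
    exact add_left_cancel this
  exact one_ne_zero_fin n hn this.symm

lemma nu2_diff (n : ℕ) [NeZero n] (hn : 3 ≤ n) (σ τ : Equiv.Perm (Fin n)) (c : Fin n) :
    nu2Perm n σ τ - nu2Perm n σ (τ * Equiv.swap c (c + 1)) =
      C (Complex.I / 4) *
        ((Zv n (σ (c + 1)) + Zv n (σ c) - Zv n (σ (c - 1)) - Zv n (σ (c + 1 + 1))) *
          (Wv n (τ c) - Wv n (τ (c + 1)))) := by
  have hcc := fin_succ_ne_self n hn c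
  rw [nu2Perm_eq, nu2Perm_eq, ← mul_sub]
  congr 1
  rw [← Finset.sum_sub_distrib]
  set h : Fin n → MvPolynomial (Fin n ⊕ Fin n) ℂ :=
    fun j => Wv n (τ j) - Wv n (τ (Equiv.swap c (c + 1) j)) with hh
  have key : ∀ j : Fin n,
      (Wv n (τ j) - Wv n (τ (j + 1))) * (Zv n (σ j) + Zv n (σ (j + 1))) -
      (Wv n ((τ * Equiv.swap c (c + 1)) j) - Wv n ((τ * Equiv.swap c (c + 1)) (j + 1))) *
        (Zv n (σ j) + Zv n (σ (j + 1))) =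
      h j * (Zv n (σ j) + Zv n (σ (j + 1))) - h (j + 1) * (Zv n (σ j) + Zv n (σ (j + 1))) := by
    intro j
    simp only [hh, Equiv.Perm.mul_apply]
    ring
  rw [Finset.sum_congr rfl fun j _ => key j, Finset.sum_sub_distrib]
  have hre := Fintype.sum_bijective (fun x : Fin n => x + 1)
    (Equiv.addRight (1 : Fin n)).bijective
    (fun j => h (j + 1) * (Zv n (σ j) + Zv n (σ (j + 1))))
    (fun k => h k * (Zv n (σ (k - 1)) + Zv n (σ k)))
    (fun j => by simp only [add_sub_cancel_right])
  rw [hre, ← Finset.sum_sub_distrib]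
  have key2 : ∀ j : Fin n,
      h j * (Zv n (σ j) + Zv n (σ (j + 1))) - h j * (Zv n (σ (j - 1)) + Zv n (σ j)) =
      h j * (Zv n (σ (j + 1)) - Zv n (σ (j - 1))) := fun j => by ring
  rw [Finset.sum_congr rfl fun j _ => key2 j]
  have hzero : ∀ j ∈ univ, j ∉ ({c, c + 1} : Finset (Fin n)) →
      h j * (Zv n (σ (j + 1)) - Zv n (σ (j - 1))) = 0 := by
    intro j _ hj
    rw [Finset.mem_insert, Finset.mem_singleton] at hj
    push_neg at hj
    have : Equiv.swap c (c + 1) j = j := Equiv.swap_apply_of_ne_of_ne hj.1 hj.2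
    simp only [hh, this, sub_self, zero_mul]
  rw [← Finset.sum_subset (Finset.subset_univ ({c, c + 1} : Finset (Fin n))) hzero]
  rw [Finset.sum_pair hcc]
  simp only [hh, Equiv.swap_apply_left, Equiv.swap_apply_right, add_sub_cancel_right]
  ring

lemma E00_mem (n : ℕ) [NeZero n] (hn : 3 ≤ n) :
    (Zv n 0 - Zv n (Lst n)) * (Wv n 0 - Wv n (Lst n)) ∈
      Algebra.adjoin ℂ {x : MvPolynomial (Fin n ⊕ Fin n) ℂ |
        ∃ σ τ : Equiv.Perm (Fin n), x = nu2Perm n σ τ} := by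
  set Aset := {x : MvPolynomial (Fin n ⊕ Fin n) ℂ |
    ∃ σ τ : Equiv.Perm (Fin n), x = nu2Perm n σ τ} with hAset
  rcases eq_or_lt_of_le hn with h3 | h4
  · -- n = 3
    have h3' : n = 3 := h3.symm
    subst h3'
    set c : Fin 3 := 1 with hc
    set σa : Equiv.Perm (Fin 3) := Equiv.swap 0 2 with hσa
    set σb : Equiv.Perm (Fin 3) := 1 with hσb
    set τ : Equiv.Perm (Fin 3) := Equiv.swap 0 1 with hτ
    have hDa := nu2_diff 3 hn σa τ c
    have hDb := nu2_diff 3 hn σb τ c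
    have e1 : σa (c + 1) = 0 := rfl
    have e2 : σa c = 1 := rfl
    have e3 : σa (c - 1) = 2 := rfl
    have e4 : σa (c + 1 + 1) = 2 := rfl
    have f1 : σb (c + 1) = 2 := rfl
    have f2 : σb c = 1 := rfl
    have f3 : σb (c - 1) = 0 := rfl
    have f4 : σb (c + 1 + 1) = 0 := rfl
    have g1 : τ c = 0 := rfl
    have g2 : τ (c + 1) = 2 := rfl
    have hLst : Lst 3 = (2 : Fin 3) := rfl
    rw [e1, e2, e3, e4, g1, g2] at hDa
    rw [f1, f2, f3, f4, g1, g2] at hDb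
    have heq : (Zv 3 0 - Zv 3 (Lst 3)) * (Wv 3 0 - Wv 3 (Lst 3)) =
        C (-(4/3) * Complex.I) *
          ((nu2Perm 3 σa τ - nu2Perm 3 σa (τ * Equiv.swap c (c + 1))) -
           (nu2Perm 3 σb τ - nu2Perm 3 σb (τ * Equiv.swap c (c + 1)))) := by
      rw [hDa, hDb, hLst]
      rw [← mul_sub (C (Complex.I / 4)), ← mul_assoc, ← C_mul]
      have hk : (-(4/3) * Complex.I) * (Complex.I / 4) = 1/3 := by
        linear_combination (-(1/3) : ℂ) * Complex.I_mul_I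
      rw [hk]
      have h31 : (C (1/3 : ℂ) : MvPolynomial (Fin 3 ⊕ Fin 3) ℂ) * 3 = 1 := by
        rw [← map_ofNat (C : ℂ →+* MvPolynomial (Fin 3 ⊕ Fin 3) ℂ) 3, ← C_mul]
        norm_num
      calc (Zv 3 0 - Zv 3 2) * (Wv 3 0 - Wv 3 2)
          = (C (1/3 : ℂ) * 3) * ((Zv 3 0 - Zv 3 2) * (Wv 3 0 - Wv 3 2)) := by
            rw [h31, one_mul]
        _ = C (1/3 : ℂ) *
            ((Zv 3 0 + Zv 3 1 - Zv 3 2 - Zv 3 2) * (Wv 3 0 - Wv 3 2) -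
             (Zv 3 2 + Zv 3 1 - Zv 3 0 - Zv 3 0) * (Wv 3 0 - Wv 3 2)) := by
            ring
    rw [heq]
    refine Subalgebra.mul_mem _ (Subalgebra.algebraMap_mem _ _) ?_
    refine Subalgebra.sub_mem _ ?_ ?_ <;>
      refine Subalgebra.sub_mem _ ?_ ?_ <;>
      exact Algebra.subset_adjoin ⟨_, _, rfl⟩
  · -- n ≥ 4
    have h4' : 4 ≤ n := h4
    set c : Fin n := 1 with hcdef
    have hv0 : ((0 : Fin n) : ℕ) = 0 := rfl
    have hone : ((1 : Fin n) : ℕ) = 1 := by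
      rw [Fin.val_one']
      exact Nat.mod_eq_of_lt (by omega)
    have hv1 : ((c : Fin n) : ℕ) = 1 := by rw [hcdef, hone]
    have hv2 : ((c + 1 : Fin n) : ℕ) = 2 := by
      simp only [Fin.val_add, hv1, hone]
      rw [Nat.mod_eq_of_lt (by omega)]
    have hv3 : ((c + 1 + 1 : Fin n) : ℕ) = 3 := by
      simp only [Fin.val_add, hv1, hone, hv2]
      rw [Nat.mod_eq_of_lt (by omega)]
    have hvL : ((Lst n : Fin n) : ℕ) = n - 1 := rfl
    have d01 : (0 : Fin n) ≠ c := Fin.ne_of_val_ne (by omega)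
    have d02 : (0 : Fin n) ≠ c + 1 := Fin.ne_of_val_ne (by omega)
    have d03 : (0 : Fin n) ≠ c + 1 + 1 := Fin.ne_of_val_ne (by omega)
    have d12 : c ≠ c + 1 := Fin.ne_of_val_ne (by omega)
    have d13 : c ≠ c + 1 + 1 := Fin.ne_of_val_ne (by omega)
    have d23 : c + 1 ≠ c + 1 + 1 := Fin.ne_of_val_ne (by omega)
    have dLc : Lst n ≠ c := Fin.ne_of_val_ne (by omega)
    have dL0 : Lst n ≠ 0 := Fin.ne_of_val_ne (by omega)
    have dL2 : Lst n ≠ c + 1 := Fin.ne_of_val_ne (by omega)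
    have dcL : c ≠ Lst n := dLc.symm
    set ρ : Equiv.Perm (Fin n) := Equiv.addRight (1 : Fin n) with hρdef
    have hρ : ∀ x : Fin n, ρ⁻¹ x = x - 1 := by
      intro x
      show ρ.symm x = x - 1
      rw [hρdef, Equiv.symm_apply_eq]
      show x = x - 1 + 1
      rw [sub_eq_add_neg, add_assoc, neg_add_cancel, add_zero]
    have hc0 : c - 1 = 0 := sub_self 1
    have hLadd : Lst n + 1 = 0 := by
      apply Fin.ext
      simp only [Fin.val_add, hvL, hone, Fin.val_zero]
      rw [Nat.sub_add_cancel (by omega)]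
      exact Nat.mod_self n
    have h0L : (0 : Fin n) - 1 = Lst n := by
      rw [sub_eq_iff_eq_add, hLadd]
    set s12 : Equiv.Perm (Fin n) := Equiv.swap c (c + 1) with hs12
    set s13 : Equiv.Perm (Fin n) := Equiv.swap c (c + 1 + 1) with hs13
    set σ₁ : Equiv.Perm (Fin n) := ρ⁻¹ * s12 with hσ₁
    set σ₂ : Equiv.Perm (Fin n) := ρ⁻¹ * (s12 * s13) with hσ₂
    set τ₀ : Equiv.Perm (Fin n) := Equiv.swap 0 c * Equiv.swap (c + 1) (Lst n) with hτ₀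
    have e1 : σ₁ (c + 1) = 0 := by
      rw [hσ₁, Equiv.Perm.mul_apply, hs12, Equiv.swap_apply_right, hρ, hc0]
    have e2 : σ₁ c = c := by
      rw [hσ₁, Equiv.Perm.mul_apply, hs12, Equiv.swap_apply_left, hρ, add_sub_cancel_right]
    have e3 : σ₁ (c - 1) = Lst n := by
      rw [hc0, hσ₁, Equiv.Perm.mul_apply, hs12, Equiv.swap_apply_of_ne_of_ne d01 d02, hρ, h0L]
    have e4 : σ₁ (c + 1 + 1) = c + 1 := by
      rw [hσ₁, Equiv.Perm.mul_apply, hs12,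
        Equiv.swap_apply_of_ne_of_ne d13.symm d23.symm, hρ, add_sub_cancel_right]
    have f1 : σ₂ (c + 1) = 0 := by
      rw [hσ₂, Equiv.Perm.mul_apply, Equiv.Perm.mul_apply, hs13,
        Equiv.swap_apply_of_ne_of_ne d12.symm d23, hs12, Equiv.swap_apply_right, hρ, hc0]
    have f2 : σ₂ c = c + 1 := by
      rw [hσ₂, Equiv.Perm.mul_apply, Equiv.Perm.mul_apply, hs13, Equiv.swap_apply_left,
        hs12, Equiv.swap_apply_of_ne_of_ne d13.symm d23.symm, hρ, add_sub_cancel_right]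
    have f3 : σ₂ (c - 1) = Lst n := by
      rw [hc0, hσ₂, Equiv.Perm.mul_apply, Equiv.Perm.mul_apply, hs13,
        Equiv.swap_apply_of_ne_of_ne d01 d03, hs12,
        Equiv.swap_apply_of_ne_of_ne d01 d02, hρ, h0L]
    have f4 : σ₂ (c + 1 + 1) = c := by
      rw [hσ₂, Equiv.Perm.mul_apply, Equiv.Perm.mul_apply, hs13, Equiv.swap_apply_right,
        hs12, Equiv.swap_apply_left, hρ, add_sub_cancel_right]
    have g1 : τ₀ c = 0 := by
      rw [hτ₀, Equiv.Perm.mul_apply, Equiv.swap_apply_of_ne_of_ne d12 dcL,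
        Equiv.swap_apply_right]
    have g2 : τ₀ (c + 1) = Lst n := by
      rw [hτ₀, Equiv.Perm.mul_apply, Equiv.swap_apply_left,
        Equiv.swap_apply_of_ne_of_ne dL0 dLc]
    have hD1 := nu2_diff n hn σ₁ τ₀ c
    have hD2 := nu2_diff n hn σ₂ τ₀ c
    rw [e1, e2, e3, e4, g1, g2] at hD1
    rw [f1, f2, f3, f4, g1, g2] at hD2
    have heq : (Zv n 0 - Zv n (Lst n)) * (Wv n 0 - Wv n (Lst n)) =
        C (-2 * Complex.I) *
          ((nu2Perm n σ₁ τ₀ - nu2Perm n σ₁ (τ₀ * Equiv.swap c (c + 1))) +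
           (nu2Perm n σ₂ τ₀ - nu2Perm n σ₂ (τ₀ * Equiv.swap c (c + 1)))) := by
      rw [hD1, hD2]
      rw [← mul_add (C (Complex.I / 4)), ← mul_assoc, ← C_mul]
      have hk : (-2 * Complex.I) * (Complex.I / 4) = 1/2 := by
        linear_combination (-(1/2) : ℂ) * Complex.I_mul_I
      rw [hk]
      have h21 : (C (1/2 : ℂ) : MvPolynomial (Fin n ⊕ Fin n) ℂ) * 2 = 1 := by
        rw [← map_ofNat (C : ℂ →+* MvPolynomial (Fin n ⊕ Fin n) ℂ) 2, ← C_mul]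
        norm_num
      calc (Zv n 0 - Zv n (Lst n)) * (Wv n 0 - Wv n (Lst n))
          = (C (1/2 : ℂ) * 2) * ((Zv n 0 - Zv n (Lst n)) * (Wv n 0 - Wv n (Lst n))) := by
            rw [h21, one_mul]
        _ = C (1/2 : ℂ) *
            ((Zv n 0 + Zv n c - Zv n (Lst n) - Zv n (c + 1)) * (Wv n 0 - Wv n (Lst n)) +
             (Zv n 0 + Zv n (c + 1) - Zv n (Lst n) - Zv n c) * (Wv n 0 - Wv n (Lst n))) := by
            ring
    rw [heq]
    refine Subalgebra.mul_mem _ (Subalgebra.algebraMap_mem _ _) ?_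
    refine Subalgebra.add_mem _ ?_ ?_ <;>
      refine Subalgebra.sub_mem _ ?_ ?_ <;>
      exact Algebra.subset_adjoin ⟨_, _, rfl⟩

lemma phiProd_mem (n : ℕ) [NeZero n] (hn : 3 ≤ n) (p : Fin (n - 1) × Fin (n - 1)) :
    phiProd n p ∈ Algebra.adjoin ℂ {x : MvPolynomial (Fin n ⊕ Fin n) ℂ |
      ∃ σ τ : Equiv.Perm (Fin n), x = nu2Perm n σ τ} := by
  set x : Fin n := Fin.castLE (Nat.sub_le n 1) p.1 with hx
  set y : Fin n := Fin.castLE (Nat.sub_le n 1) p.2 with hy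
  set α : Equiv.Perm (Fin n) := Equiv.swap 0 x with hα
  set β : Equiv.Perm (Fin n) := Equiv.swap 0 y with hβ
  set φ : MvPolynomial (Fin n ⊕ Fin n) ℂ →ₐ[ℂ] MvPolynomial (Fin n ⊕ Fin n) ℂ :=
    rename (Sum.map ⇑α ⇑β) with hφ
  have hxval : (x : ℕ) = (p.1 : ℕ) := rfl
  have hyval : (y : ℕ) = (p.2 : ℕ) := rfl
  have hLx : Lst n ≠ x := Fin.ne_of_val_ne (by have := p.1.isLt; show n - 1 ≠ _; omega)
  have hLy : Lst n ≠ y := Fin.ne_of_val_ne (by have := p.2.isLt; show n - 1 ≠ _; omega)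
  have hL0 : Lst n ≠ 0 := Fin.ne_of_val_ne (by show n - 1 ≠ 0; omega)
  have hα0 : α 0 = x := Equiv.swap_apply_left 0 x
  have hαL : α (Lst n) = Lst n := Equiv.swap_apply_of_ne_of_ne hL0 hLx
  have hβ0 : β 0 = y := Equiv.swap_apply_left 0 y
  have hβL : β (Lst n) = Lst n := Equiv.swap_apply_of_ne_of_ne hL0 hLy
  have himg : φ ((Zv n 0 - Zv n (Lst n)) * (Wv n 0 - Wv n (Lst n))) = phiProd n p := by
    simp only [hφ, map_mul, map_sub, Zv, Wv, rename_X, Sum.map_inl, Sum.map_inr,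
      hα0, hαL, hβ0, hβL]
    rfl
  have hmem := E00_mem n hn
  have hmap : φ ((Zv n 0 - Zv n (Lst n)) * (Wv n 0 - Wv n (Lst n))) ∈
      (Algebra.adjoin ℂ {x : MvPolynomial (Fin n ⊕ Fin n) ℂ |
        ∃ σ τ : Equiv.Perm (Fin n), x = nu2Perm n σ τ}).map φ :=
    Subalgebra.mem_map.2 ⟨_, hmem, rfl⟩
  rw [AlgHom.map_adjoin] at hmap
  have hsub : φ '' {x : MvPolynomial (Fin n ⊕ Fin n) ℂ |
      ∃ σ τ : Equiv.Perm (Fin n), x = nu2Perm n σ τ} ⊆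
      {x : MvPolynomial (Fin n ⊕ Fin n) ℂ | ∃ σ τ : Equiv.Perm (Fin n), x = nu2Perm n σ τ} := by
    rintro _ ⟨q, ⟨σ, τ, rfl⟩, rfl⟩
    refine ⟨α * σ, β * τ, ?_⟩
    show φ (nu2Perm n σ τ) = _
    rw [hφ, nu2Perm, nu2Perm, rename_rename]
    congr 1
    rw [Sum.map_comp_map]
    rfl
  have := Algebra.adjoin_mono hsub hmap
  rwa [himg] at this

theorem part1 (n : ℕ) [NeZero n] (hn : 3 ≤ n) :
    Algebra.adjoin ℂ {x : MvPolynomial (Fin n ⊕ Fin n) ℂ |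
        ∃ σ τ : Equiv.Perm (Fin n), x = nu2Perm n σ τ} =
      Algebra.adjoin ℂ (Set.range (phiProd n)) := by
  apply le_antisymm
  · apply Algebra.adjoin_le
    rintro _ ⟨σ, τ, rfl⟩
    exact nu2Perm_mem n σ τ
  · apply Algebra.adjoin_le
    rintro _ ⟨p, rfl⟩
    exact phiProd_mem n hn p

end Aux

/-- The algebra `Aₙ` generated by the `ν₂^{(σ,τ)}` equals the algebra generated by the
products `(z_i − z_n)(w_j − w_n)`, and the kernel of `θ` is the ideal of `2×2` minors;
hence `Aₙ` is the determinantal ring `ℂ[d_{ij}]/I₂`. -/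
theorem statement15 (n : ℕ) [NeZero n] (hn : 3 ≤ n) :
    Algebra.adjoin ℂ {x : MvPolynomial (Fin n ⊕ Fin n) ℂ |
        ∃ σ τ : Equiv.Perm (Fin n), x = nu2Perm n σ τ} =
      Algebra.adjoin ℂ (Set.range (phiProd n)) ∧
    RingHom.ker (theta n) =
      Ideal.span {q : MvPolynomial (Fin (n - 1) × Fin (n - 1)) ℂ |
        ∃ i₁ i₂ j₁ j₂ : Fin (n - 1),
          q = X (i₁, j₁) * X (i₂, j₂) - X (i₁, j₂) * X (i₂, j₁)} :=
  ⟨part1 n hn, theta_ker_eq n⟩
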